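/- With notation as above, let x = yz with y ∈ ∏_{r=1}^k C_p[r] and z ∈ 𝔖_k^{[p]}. Then xDx⁻¹ ∩ Δ = yΔy⁻¹ ∩ Δ, and this equals Δ if y ∈ Δ_k(C_p), and equals Δ_k(C_p) otherwise. -/

import Mathlib

/-! We realize the symmetric group `𝔖_{pk}` as `Equiv.Perm (Fin k × Fin p)`, where the pair
`(r, i)` denotes the `i`-th entry of the `r`-th one of the `k` successive blocks of size
`p` in `{1, …, pk}`. -/

/-- `Δ_k : 𝔖_p →* 𝔖_{pk}`: the diagonal embedding, acting simultaneously on each of the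
`k` blocks of size `p`. -/
def diagHom (k p : ℕ) : Equiv.Perm (Fin p) →* Equiv.Perm (Fin k × Fin p) where
  toFun σ := Equiv.prodCongrRight fun _ => σ
  map_one' := by
    ext x
    · rfl
    · rfl
  map_mul' σ τ := by
    ext x
    · rfl
    · rfl

/-- `τ ↦ τ^{[p]} : 𝔖_k →* 𝔖_{pk}`: permuting the `k` blocks of size `p`. -/
def blockHom (k p : ℕ) : Equiv.Perm (Fin k) →* Equiv.Perm (Fin k × Fin p) where
  toFun τ := Equiv.prodCongrLeft fun _ => τ
  map_one' := by
    ext x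
    · rfl
    · rfl
  map_mul' σ τ := by
    ext x
    · rfl
    · rfl

/-- `(σ_1, …, σ_k) ↦ ∏_{r=1}^k σ_r[r]`: each `σ_r` acts on the `r`-th block of size `p`. -/
def blockwiseHom (k p : ℕ) : (Fin k → Equiv.Perm (Fin p)) →* Equiv.Perm (Fin k × Fin p) where
  toFun y := Equiv.prodCongrRight y
  map_one' := by
    ext x
    · rfl
    · rfl
  map_mul' y z := by
    ext x
    · rfl
    · rfl

/-- The subgroup `∏_{r=1}^k C_p[r]` of `𝔖_{pk}`, where `C_p = ⟨finRotate p⟩` is generated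
by a `p`-cycle. -/
def bigCpSubgroup (k p : ℕ) : Subgroup (Equiv.Perm (Fin k × Fin p)) :=
  Subgroup.map (blockwiseHom k p)
    (Subgroup.pi Set.univ fun _ => Subgroup.zpowers (finRotate p))

/-- The diagonal subgroup `Δ_k(𝔖_p)`. -/
def diagSubgroup (k p : ℕ) : Subgroup (Equiv.Perm (Fin k × Fin p)) :=
  (diagHom k p).range

/-- The diagonal subgroup `Δ_k(C_p)` of the cyclic group `C_p = ⟨finRotate p⟩`. -/
def diagCpSubgroup (k p : ℕ) : Subgroup (Equiv.Perm (Fin k × Fin p)) :=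
  Subgroup.map (diagHom k p) (Subgroup.zpowers (finRotate p))

/-- The subgroup `𝔖_k^{[p]}` of block permutations. -/
def blockSubgroup (k p : ℕ) : Subgroup (Equiv.Perm (Fin k × Fin p)) :=
  (blockHom k p).range

/-- The subgroup `D = Δ_k(𝔖_p) · C_k^{[p]}`, where `C_k = ⟨finRotate k⟩ ≤ 𝔖_k` is generated
by a `k`-cycle (`Δ_k(𝔖_p)` and `C_k^{[p]}` centralize each other, so `D` is their join). -/
def Dsubgroup (k p : ℕ) : Subgroup (Equiv.Perm (Fin k × Fin p)) :=
  diagSubgroup k p ⊔ Subgroup.map (blockHom k p) (Subgroup.zpowers (finRotate k))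

/-
Let `B = ∏_r 𝔖_p[r]` be the group of block-preserving permutations. It contains `Δ` and `y` and is
normalized by `z`, and `D ∩ B = Δ` because a nontrivial block permutation moves blocks; hence
`xDx⁻¹ ∩ Δ = xΔx⁻¹ ∩ Δ`, and `xΔx⁻¹ = yΔy⁻¹` as `z` centralizes `Δ`. Writing `y = ∏_r f_r[r]`,
the conjugate `yΔ(σ)y⁻¹ = ∏_r (f_r σ f_r⁻¹)[r]` is diagonal iff all `f_r σ f_r⁻¹` agree. If
`f_r ≠ f_s`, this makes `σ` commute with `f_s⁻¹ f_r ≠ 1`, which generates `C_p` since `p` is prime,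
and the centralizer of the `p`-cycle in `𝔖_p` is `C_p`.
-/

open Equiv Subgroup

theorem Subgroup.map_conj_mul {G : Type*} [Group G] (H : Subgroup G) (x y : G) :
    H.map (MulAut.conj (x * y)).toMonoidHom =
      (H.map (MulAut.conj y).toMonoidHom).map (MulAut.conj x).toMonoidHom := by
  rw [map_map]
  congr 1
  ext g
  simp [mul_assoc]

theorem Subgroup.map_conj_eq_of_mem_normalizer {G : Type*} [Group G] {H : Subgroup G} {x : G}
    (hx : x ∈ normalizer H) : H.map (MulAut.conj x).toMonoidHom = H :=
  mem_normalizer_iff_map_conj_eq.mp hx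

theorem Subgroup.map_conj_inf_eq_of_inf_eq {G : Type*} [Group G] {D B K : Subgroup G} {x : G}
    (hKB : K ≤ B) (hx : x ∈ normalizer B) (hDB : D ⊓ B = K) :
    D.map (MulAut.conj x).toMonoidHom ⊓ K = K.map (MulAut.conj x).toMonoidHom ⊓ K := by
  calc D.map (MulAut.conj x).toMonoidHom ⊓ K
      = D.map (MulAut.conj x).toMonoidHom ⊓ B ⊓ K := by rw [inf_assoc, inf_eq_right.mpr hKB]
    _ = K.map (MulAut.conj x).toMonoidHom ⊓ K := by
      rw [← map_conj_eq_of_mem_normalizer hx, ← map_inf_eq _ _ _ (MulEquiv.injective _), hDB]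

theorem zpowers_eq_zpowers_of_mem_of_ne_one {G : Type*} [Group G] [Finite G] {g w : G}
    (hg : (orderOf g).Prime) (hw : w ∈ zpowers g) (hw1 : w ≠ 1) : zpowers w = zpowers g := by
  have hdvd : orderOf w ∣ orderOf g := orderOf_dvd_of_mem_zpowers hw
  have hord : orderOf w = orderOf g :=
    (hg.eq_one_or_self_of_dvd _ hdvd).resolve_left (by rwa [orderOf_eq_one_iff])
  exact eq_of_le_of_card_ge (zpowers_le.mpr hw) (by rw [Nat.card_zpowers, Nat.card_zpowers, hord])

theorem orderOf_finRotate {n : ℕ} (hn : 2 ≤ n) : orderOf (finRotate n) = n := by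
  rw [(isCycle_finRotate_of_le hn).orderOf, support_finRotate_of_le hn, Finset.card_univ,
    Fintype.card_fin]

theorem Equiv.Perm.mem_zpowers_finRotate_of_commute {n : ℕ} {σ : Perm (Fin n)}
    (h : Commute σ (finRotate n)) : σ ∈ zpowers (finRotate n) := by
  rcases lt_or_ge n 2 with hn | hn
  · have : Subsingleton (Perm (Fin n)) := by
      interval_cases n <;> infer_instance
    rw [Subsingleton.elim σ 1]
    exact one_mem _
  · obtain ⟨hσ, hmem⟩ := (isCycle_finRotate_of_le hn).commute_iff.mp h
    rwa [Perm.ofSubtype_subtypePerm] at hmem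
    simp [support_finRotate_of_le hn]

theorem Equiv.Perm.mem_zpowers_finRotate_of_commute_of_mem {p : ℕ} (hp : p.Prime)
    {σ w : Perm (Fin p)} (hw : w ∈ zpowers (finRotate p)) (hw1 : w ≠ 1) (h : Commute σ w) :
    σ ∈ zpowers (finRotate p) := by
  have hord : (orderOf (finRotate p)).Prime := by rwa [orderOf_finRotate hp.two_le]
  obtain ⟨m, hm⟩ : finRotate p ∈ zpowers w := by
    rw [zpowers_eq_zpowers_of_mem_of_ne_one hord hw hw1]
    exact mem_zpowers _
  exact Perm.mem_zpowers_finRotate_of_commute (hm ▸ h.zpow_right m)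

section Blocks

variable {k p : ℕ}

theorem diagHom_eq_blockwiseHom (σ : Perm (Fin p)) :
    diagHom k p σ = blockwiseHom k p fun _ => σ := rfl

theorem blockwiseHom_injective : Function.Injective (blockwiseHom k p) := fun _ _ h =>
  funext fun r => Equiv.ext fun i => congrArg Prod.snd (Equiv.congr_fun h (r, i))

theorem diagSubgroup_le_range_blockwiseHom : diagSubgroup k p ≤ (blockwiseHom k p).range := by
  rintro - ⟨σ, rfl⟩
  exact ⟨fun _ => σ, rfl⟩

theorem diagCpSubgroup_le_diagSubgroup : diagCpSubgroup k p ≤ diagSubgroup k p :=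
  map_le_range _ _

theorem blockHom_mem_range_blockwiseHom_iff (hp : 0 < p) {ρ : Perm (Fin k)} :
    blockHom k p ρ ∈ (blockwiseHom k p).range ↔ ρ = 1 := by
  refine ⟨fun ⟨f, hf⟩ => Equiv.ext fun r => ?_, fun h => ⟨1, by rw [h, map_one, map_one]⟩⟩
  exact (congrArg Prod.fst (Equiv.congr_fun hf (r, ⟨0, hp⟩))).symm

theorem commute_diagHom_blockHom (σ : Perm (Fin p)) (ρ : Perm (Fin k)) :
    Commute (diagHom k p σ) (blockHom k p ρ) := Equiv.ext fun _ => rfl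

theorem blockHom_conj_blockwiseHom (ρ : Perm (Fin k)) (f : Fin k → Perm (Fin p)) :
    blockHom k p ρ * blockwiseHom k p f * (blockHom k p ρ)⁻¹ =
      blockwiseHom k p fun r => f (ρ⁻¹ r) := by
  ext ⟨r, i⟩ <;> simp [blockHom, blockwiseHom]

theorem blockwiseHom_conj_diagHom (f : Fin k → Perm (Fin p)) (σ : Perm (Fin p)) :
    blockwiseHom k p f * diagHom k p σ * (blockwiseHom k p f)⁻¹ =
      blockwiseHom k p fun r => f r * σ * (f r)⁻¹ := by
  rw [diagHom_eq_blockwiseHom, ← map_inv, ← map_mul, ← map_mul]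
  rfl

theorem range_blockHom_le_normalizer :
    (blockHom k p).range ≤ normalizer ((blockwiseHom k p).range : Set (Perm (Fin k × Fin p))) :=
  le_normalizer_iff.mpr <| by
    rintro - ⟨ρ, rfl⟩ - ⟨f, rfl⟩
    rw [blockHom_conj_blockwiseHom]
    exact ⟨_, rfl⟩

theorem range_blockHom_le_centralizer :
    (blockHom k p).range ≤ centralizer (diagSubgroup k p : Set (Perm (Fin k × Fin p))) := by
  rintro - ⟨ρ, rfl⟩ - ⟨σ, rfl⟩
  exact commute_diagHom_blockHom σ ρ

theorem mem_Dsubgroup_iff {g : Perm (Fin k × Fin p)} :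
    g ∈ Dsubgroup k p ↔
      ∃ (σ : Perm (Fin p)) (ρ : zpowers (finRotate k)), diagHom k p σ * blockHom k p ρ = g := by
  have hrange := MonoidHom.noncommCoprod_range (diagHom k p)
    ((blockHom k p).comp (zpowers (finRotate k)).subtype) fun σ ρ => commute_diagHom_blockHom σ ρ.1
  rw [MonoidHom.range_comp, range_subtype] at hrange
  rw [Dsubgroup, diagSubgroup, ← hrange]
  simp only [MonoidHom.mem_range, Prod.exists]
  rfl

theorem Dsubgroup_inf_range_blockwiseHom (hp : 0 < p) :
    Dsubgroup k p ⊓ (blockwiseHom k p).range = diagSubgroup k p := by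
  refine le_antisymm ?_ (le_inf le_sup_left diagSubgroup_le_range_blockwiseHom)
  intro g ⟨hD, hB⟩
  obtain ⟨σ, ρ, rfl⟩ := mem_Dsubgroup_iff.mp hD
  have hρ : (ρ : Perm (Fin k)) = 1 := (blockHom_mem_range_blockwiseHom_iff hp).mp <| by
    simpa using mul_mem (inv_mem (diagSubgroup_le_range_blockwiseHom ⟨σ, rfl⟩)) hB
  rw [hρ, map_one, mul_one]
  exact ⟨σ, rfl⟩

theorem blockwiseHom_conj_diagHom_of_mem {f : Fin k → Perm (Fin p)}
    (hf : ∀ r, f r ∈ zpowers (finRotate p)) {σ : Perm (Fin p)} (hσ : σ ∈ zpowers (finRotate p)) :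
    blockwiseHom k p f * diagHom k p σ * (blockwiseHom k p f)⁻¹ = diagHom k p σ := by
  rw [blockwiseHom_conj_diagHom, diagHom_eq_blockwiseHom]
  congr 1
  funext r
  rw [setLike_mul_comm (hf r) hσ, mul_inv_cancel_right]

theorem map_conj_blockwiseHom_diagSubgroup_inf_eq_diagCpSubgroup (hp : p.Prime)
    {f : Fin k → Perm (Fin p)} (hf : ∀ r, f r ∈ zpowers (finRotate p)) {r s : Fin k}
    (hrs : f r ≠ f s) :
    (diagSubgroup k p).map (MulAut.conj (blockwiseHom k p f)).toMonoidHom ⊓ diagSubgroup k p =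
      diagCpSubgroup k p := by
  refine le_antisymm ?_ ?_
  · rintro - ⟨⟨-, ⟨σ, rfl⟩, rfl⟩, ⟨σ', hσ'⟩⟩
    rw [MulEquiv.coe_toMonoidHom, MulAut.conj_apply, blockwiseHom_conj_diagHom,
      diagHom_eq_blockwiseHom] at hσ'
    have hconj := congrFun (blockwiseHom_injective hσ')
    have hcomm : Commute σ ((f s)⁻¹ * f r) := by
      have h := (hconj r).symm.trans (hconj s)
      calc σ * ((f s)⁻¹ * f r) = (f s)⁻¹ * (f s * σ * (f s)⁻¹) * f r := by group
        _ = (f s)⁻¹ * (f r * σ * (f r)⁻¹) * f r := by rw [h]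
        _ = (f s)⁻¹ * f r * σ := by group
    have hσ : σ ∈ zpowers (finRotate p) :=
      Perm.mem_zpowers_finRotate_of_commute_of_mem hp (mul_mem (inv_mem (hf s)) (hf r))
        (by rwa [Ne, inv_mul_eq_one, eq_comm]) hcomm
    exact ⟨σ, hσ, (blockwiseHom_conj_diagHom_of_mem hf hσ).symm⟩
  · rintro - ⟨σ, hσ, rfl⟩
    exact ⟨⟨_, ⟨σ, rfl⟩, blockwiseHom_conj_diagHom_of_mem hf hσ⟩, ⟨σ, rfl⟩⟩

theorem exists_ne_of_blockwiseHom_notMem_diagCpSubgroup {f : Fin k → Perm (Fin p)}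
    (hf : ∀ r, f r ∈ zpowers (finRotate p)) (hy : blockwiseHom k p f ∉ diagCpSubgroup k p) :
    ∃ r s, f r ≠ f s := by
  by_contra! hconst
  rcases isEmpty_or_nonempty (Fin k) with hk | ⟨⟨r⟩⟩
  · exact hy (by rw [Subsingleton.elim f 1, map_one]; exact one_mem _)
  · exact hy ⟨f r, hf r, congrArg (blockwiseHom k p) (funext (hconst r))⟩

end Blocks

theorem conjugate_intersection_diagonal_general
    (p k : ℕ) [hp : Fact p.Prime]
    (y z : Equiv.Perm (Fin k × Fin p))
    (hy : y ∈ bigCpSubgroup k p) (hz : z ∈ blockSubgroup k p) :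
    (Subgroup.map (MulAut.conj (y * z)).toMonoidHom (Dsubgroup k p) ⊓ diagSubgroup k p =
      Subgroup.map (MulAut.conj y).toMonoidHom (diagSubgroup k p) ⊓ diagSubgroup k p) ∧
    (y ∈ diagCpSubgroup k p →
      Subgroup.map (MulAut.conj (y * z)).toMonoidHom (Dsubgroup k p) ⊓ diagSubgroup k p =
        diagSubgroup k p) ∧
    (y ∉ diagCpSubgroup k p →
      Subgroup.map (MulAut.conj (y * z)).toMonoidHom (Dsubgroup k p) ⊓ diagSubgroup k p =
        diagCpSubgroup k p) := by
  obtain ⟨f, hf, rfl⟩ := hy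
  obtain ⟨τ, rfl⟩ := hz
  have hfC : ∀ r, f r ∈ zpowers (finRotate p) := fun r => hf r (Set.mem_univ r)
  have hx : blockwiseHom k p f * blockHom k p τ ∈
      normalizer ((blockwiseHom k p).range : Set (Perm (Fin k × Fin p))) :=
    mul_mem (le_normalizer ⟨f, rfl⟩) (range_blockHom_le_normalizer ⟨τ, rfl⟩)
  have hτ : blockHom k p τ ∈ normalizer (diagSubgroup k p : Set (Perm (Fin k × Fin p))) :=
    centralizer_le_normalizer _ (range_blockHom_le_centralizer ⟨τ, rfl⟩)
  have reduction := map_conj_inf_eq_of_inf_eq diagSubgroup_le_range_blockwiseHom hx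
    (Dsubgroup_inf_range_blockwiseHom hp.out.pos)
  rw [map_conj_mul (diagSubgroup k p), map_conj_eq_of_mem_normalizer hτ] at reduction
  refine ⟨reduction, fun hyΔ => ?_, fun hyΔ => ?_⟩
  · have hyN := le_normalizer (diagCpSubgroup_le_diagSubgroup hyΔ)
    rw [reduction, map_conj_eq_of_mem_normalizer hyN, inf_idem]
  · obtain ⟨r, s, hrs⟩ := exists_ne_of_blockwiseHom_notMem_diagCpSubgroup hfC hyΔ
    rw [reduction]
    exact map_conj_blockwiseHom_diagSubgroup_inf_eq_diagCpSubgroup hp.out hfC hrs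

/-- With `x = y z`, `y ∈ ∏_{r=1}^k C_p[r]` and `z ∈ 𝔖_k^{[p]}`, we have
`xDx⁻¹ ∩ Δ = yΔy⁻¹ ∩ Δ`, and this equals `Δ` if `y ∈ Δ_k(C_p)` and `Δ_k(C_p)` otherwise. -/
theorem conjugate_intersection_diagonal
    (p k : ℕ) [hp : Fact p.Prime] (hk : 0 < k) (hpk : ¬ p ∣ k)
    (y z : Equiv.Perm (Fin k × Fin p))
    (hy : y ∈ bigCpSubgroup k p) (hz : z ∈ blockSubgroup k p) :
    (Subgroup.map (MulAut.conj (y * z)).toMonoidHom (Dsubgroup k p) ⊓ diagSubgroup k p =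
      Subgroup.map (MulAut.conj y).toMonoidHom (diagSubgroup k p) ⊓ diagSubgroup k p) ∧
    (y ∈ diagCpSubgroup k p →
      Subgroup.map (MulAut.conj (y * z)).toMonoidHom (Dsubgroup k p) ⊓ diagSubgroup k p =
        diagSubgroup k p) ∧
    (y ∉ diagCpSubgroup k p →
      Subgroup.map (MulAut.conj (y * z)).toMonoidHom (Dsubgroup k p) ⊓ diagSubgroup k p =
        diagCpSubgroup k p) :=
  conjugate_intersection_diagonal_general p k (hp := hp) y z hy hz
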